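/- arXiv:2312.12171 — 5 statements merged into one kernel-verified Lean document; each statement's English description precedes it below -/
import Mathlib

section
/- For every x, Y ∈ E and t ∈ ℝ, the second derivative of the time-t flow map applied to the generating vector field satisfies D²(f t)(x)[Y, F x] = DF(f t x)( D(f t)(x) Y ) − D(f t)(x)( DF(x) Y ). -/
/-!
Differentiating `s ↦ f t (f s x) = f (t + s) x` at `s = 0` shows that the flow maps carry the
vector field to itself: `D(f t)(x) (F x) = F (f t x)`. Differentiating this identity in `x`,
the product rule on the left and the chain rule on the right give the formula.
-/

open ContinuousLinearMap

section

variable {E E' : Type*} [NormedAddCommGroup E] [NormedSpace ℝ E]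
  [NormedAddCommGroup E'] [NormedSpace ℝ E']

theorem fderiv_flow_apply_vectorField {F : E → E} {f : ℝ → E → E}
    (hf0 : ∀ x, f 0 x = x) (hfadd : ∀ s t x, f (s + t) x = f s (f t x))
    (hflow : ∀ t x, HasDerivAt (fun τ => f τ x) (F (f t x)) t)
    {t : ℝ} {x : E} (hft : DifferentiableAt ℝ (f t) x) :
    fderiv ℝ (f t) x (F x) = F (f t x) := by
  have hshift : HasDerivAt (fun s => f (t + s) x) (F (f t x)) 0 :=
    .comp_const_add t 0 (by simpa using hflow t x)
  have hcomp : HasDerivAt (fun s => f t (f s x)) (fderiv ℝ (f t) x (F x)) 0 := by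
    have h0 := hflow 0 x
    rw [hf0] at h0
    exact hft.hasFDerivAt.comp_hasDerivAt_of_eq 0 h0 (hf0 x).symm
  simp only [← hfadd] at hcomp
  exact hcomp.unique hshift

theorem fderiv_fderiv_apply_of_fderiv_apply_eq {g : E → E'} {G : E → E} {K : E' → E'}
    (hgK : ∀ y, fderiv ℝ g y (G y) = K (g y)) {x : E}
    (hg : DifferentiableAt ℝ g x) (hDg : DifferentiableAt ℝ (fderiv ℝ g) x)
    (hG : DifferentiableAt ℝ G x) (hK : DifferentiableAt ℝ K (g x)) (Y : E) :
    fderiv ℝ (fderiv ℝ g) x Y (G x) = fderiv ℝ K (g x) (fderiv ℝ g x Y)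
      - fderiv ℝ g x (fderiv ℝ G x Y) := by
  have h := congrArg (· Y) (fderiv_clm_apply hDg hG)
  rw [funext hgK, fderiv_fun_comp x hK hg] at h
  simp only [comp_apply, add_apply, flip_apply] at h
  rw [h, add_sub_cancel_left]

end

theorem equivariant_divergence_stmt4_general
    {E : Type*} [NormedAddCommGroup E] [NormedSpace ℝ E]
    (F : E → E) (hF : ContDiff ℝ 2 F)
    (f : ℝ → E → E)
    (hf0 : ∀ x : E, f 0 x = x)
    (hfadd : ∀ s t : ℝ, ∀ x : E, f (s + t) x = f s (f t x))
    (hflow : ∀ t : ℝ, ∀ x : E, HasDerivAt (fun τ : ℝ => f τ x) (F (f t x)) t)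
    (hfC2 : ∀ t : ℝ, ContDiff ℝ 2 (f t))
    (x Y : E) (t : ℝ) :
    fderiv ℝ (fun y => fderiv ℝ (f t) y) x Y (F x)
      = fderiv ℝ F (f t x) (fderiv ℝ (f t) x Y)
        - fderiv ℝ (f t) x (fderiv ℝ F x Y) := by
  have hft : Differentiable ℝ (f t) := (hfC2 t).differentiable (by norm_num)
  have hDft : Differentiable ℝ (fderiv ℝ (f t)) :=
    ((hfC2 t).fderiv_right (m := 1) (by norm_num)).differentiable one_ne_zero
  have hFd : Differentiable ℝ F := hF.differentiable (by norm_num)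
  exact fderiv_fderiv_apply_of_fderiv_apply_eq
    (fun y => fderiv_flow_apply_vectorField hf0 hfadd hflow (hft y))
    (hft x) (hDft x) (hFd x) (hFd _) Y

/-- For every `x Y : E` and `t ∈ ℝ`,
`D²(f t)(x)[Y, F x] = DF(f t x)(D(f t)(x) Y) − D(f t)(x)(DF(x) Y)`. -/
theorem equivariant_divergence_stmt4
    {E : Type*} [NormedAddCommGroup E] [NormedSpace ℝ E] [FiniteDimensional ℝ E]
    (F : E → E) (hF : ContDiff ℝ 2 F)
    (f : ℝ → E → E)
    (hf0 : ∀ x : E, f 0 x = x)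
    (hfadd : ∀ s t : ℝ, ∀ x : E, f (s + t) x = f s (f t x))
    (hflow : ∀ t : ℝ, ∀ x : E, HasDerivAt (fun τ : ℝ => f τ x) (F (f t x)) t)
    (hfC2 : ∀ t : ℝ, ContDiff ℝ 2 (f t))
    (x Y : E) (t : ℝ) :
    fderiv ℝ (fun y => fderiv ℝ (f t) y) x Y (F x)
      = fderiv ℝ F (f t x) (fderiv ℝ (f t) x Y)
        - fderiv ℝ (f t) x (fderiv ℝ F x Y) :=
  equivariant_divergence_stmt4_general F hF f hf0 hfadd hflow hfC2 x Y t
end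

section
/- Let u ∈ ℕ, let V be a real vector space, A : V →ₗ[ℝ] V a linear map, e : Fin u → V, F ∈ V, ε : Fin u → (V →ₗ[ℝ] ℝ), and ε^c : V →ₗ[ℝ] ℝ, such that ε i F = 0 for all i, ε^c (e j) = 0 for all j, and ε^c F = 1. Write ē := Fin.snoc e F : Fin (u+1) → V and ε̄ := Fin.snoc ε ε^c : Fin (u+1) → (V →ₗ[ℝ] ℝ). Then Σ_{i : Fin (u+1)} det( fun a b => ε̄ a (if b = i then A (ē b) else ē b) ) = ε^c (A F) · det( fun a b => ε a (e b) ) + Σ_{i : Fin u} det( fun a b => ε a (if b = i then A (e b) else e b) ). -/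
/-- removing the center direction from the equivariant divergence.
Let `V` be a real vector space, `A : V →ₗ[ℝ] V`, `e : Fin u → V` an (unstable) frame,
`F ∈ V` the flow vector, `ε : Fin u → (V →ₗ[ℝ] ℝ)` the dual (unstable) coframe, and
`εc : V →ₗ[ℝ] ℝ` the center covector, with `ε i F = 0`, `εc (e j) = 0`, `εc F = 1`.
Writing `ē := Fin.snoc e F` and `ε̄ := Fin.snoc ε εc`, the center-unstable equivariant
divergence decomposes as
`Σ_i det(ε̄ a (if b = i then A (ē b) else ē b))
  = εc (A F) · det(ε a (e b)) + Σ_i det(ε a (if b = i then A (e b) else e b))`. -/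
theorem equivariant_divergence_stmt5
    (u : ℕ) (V : Type*) [AddCommGroup V] [Module ℝ V]
    (A : V →ₗ[ℝ] V) (e : Fin u → V) (F : V)
    (ε : Fin u → (V →ₗ[ℝ] ℝ)) (εc : V →ₗ[ℝ] ℝ)
    (hεF : ∀ i : Fin u, ε i F = 0)
    (hεce : ∀ j : Fin u, εc (e j) = 0)
    (hεcF : εc F = 1) :
    (∑ i : Fin (u + 1),
        Matrix.det (Matrix.of fun a b : Fin (u + 1) =>
          (Fin.snoc ε εc : Fin (u + 1) → V →ₗ[ℝ] ℝ) a
            (if b = i then A ((Fin.snoc e F : Fin (u + 1) → V) b)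
              else (Fin.snoc e F : Fin (u + 1) → V) b)))
    = εc (A F) * Matrix.det (Matrix.of fun a b : Fin u => ε a (e b))
      + ∑ i : Fin u,
          Matrix.det (Matrix.of fun a b : Fin u =>
            ε a (if b = i then A (e b) else e b)) := by
  have hne : ∀ j : Fin u, (Fin.castSucc j) ≠ Fin.last u := fun j => (Fin.castSucc_lt_last j).ne
  have hlast :
      Matrix.det (Matrix.of fun a b : Fin (u + 1) =>
          (Fin.snoc ε εc : Fin (u + 1) → V →ₗ[ℝ] ℝ) a
            (if b = Fin.last u then A ((Fin.snoc e F : Fin (u + 1) → V) b)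
              else (Fin.snoc e F : Fin (u + 1) → V) b))
      = εc (A F) * Matrix.det (Matrix.of fun a b : Fin u => ε a (e b)) := by
    rw [Matrix.det_succ_row _ (Fin.last u), Fin.sum_univ_castSucc]
    simp only [Matrix.of_apply, Fin.snoc_last, Fin.snoc_castSucc, if_pos rfl,
      if_neg (hne _), hεce, mul_zero, zero_mul, Finset.sum_const_zero, zero_add,
      Fin.succAbove_last, Fin.val_last, Matrix.submatrix_apply]
    rw [Even.neg_one_pow ⟨u, rfl⟩, one_mul, if_pos trivial]
    congr 1
    congr 1
    ext a b
    simp [if_neg (hne b)]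
  have hcast : ∀ j : Fin u,
      Matrix.det (Matrix.of fun a b : Fin (u + 1) =>
          (Fin.snoc ε εc : Fin (u + 1) → V →ₗ[ℝ] ℝ) a
            (if b = Fin.castSucc j then A ((Fin.snoc e F : Fin (u + 1) → V) b)
              else (Fin.snoc e F : Fin (u + 1) → V) b))
      = Matrix.det (Matrix.of fun a b : Fin u => ε a (if b = j then A (e b) else e b)) := by
    intro j
    rw [Matrix.det_succ_column _ (Fin.last u), Fin.sum_univ_castSucc]
    simp only [Matrix.of_apply, Fin.snoc_last, Fin.snoc_castSucc,
      if_neg (hne j).symm, hεF, hεcF, mul_zero, zero_mul, Finset.sum_const_zero, zero_add,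
      Fin.succAbove_last, Fin.val_last, Matrix.submatrix_apply, mul_one]
    rw [Even.neg_one_pow ⟨u, rfl⟩, one_mul]
    congr 1
    ext a b
    simp only [Matrix.of_apply, Fin.snoc_castSucc, Fin.castSucc_inj, Matrix.submatrix_apply]
  rw [Fin.sum_univ_castSucc, hlast, Finset.sum_congr rfl (fun j _ => hcast j), add_comm]
end

section
/- Suppose F is bounded, μ is a finite Borel measure on E invariant under the flow (μ (f t ⁻¹' A) = μ A for every t ∈ ℝ and every Borel set A), and η : E → ℝ is C¹ with bounded derivative. Then ∫ Dη(x)(F x) dμ(x) = 0; that is, the average of the derivative of η along the flow direction vanishes against any invariant measure. -/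
/-!
For `t ≥ 0` the time-`t` map of the flow is continuous: trajectories of the bounded field `F`
starting in a ball stay, up to time `t`, in a larger compact ball on which `F` is Lipschitz, and
Gronwall's inequality applies there. Hence it preserves `μ`, and `∫ (η (f t x) - η x) dμ = 0`. The difference quotients
`(η (f t x) - η x) / t` are bounded by `sup ‖Dη‖ · sup ‖F‖` and converge to `Dη(x)(F x)` as
`t → 0⁺`, so dominated convergence gives `∫ Dη(x)(F x) dμ = 0`.
-/

open MeasureTheory Set Filter Topology Metric

theorem MeasureTheory.MeasurePreserving.integral_comp_sub_eq_zero {α : Type*}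
    [MeasurableSpace α] {μ : Measure α} [IsFiniteMeasure μ]
    {T : α → α} (hT : MeasurePreserving T μ μ) {g : α → ℝ} (hg : AEStronglyMeasurable g μ)
    (hint : Integrable (fun x => g (T x) - g x) μ) :
    ∫ x, (g (T x) - g x) ∂μ = 0 := by
  set φ : ℕ → ℝ → ℝ := fun N r => max (-N) (min N r)
  have hφ_cont (N : ℕ) : Continuous (φ N) := by fun_prop
  have hφ_bound (N : ℕ) (r : ℝ) : ‖φ N r‖ ≤ N := by
    rw [Real.norm_eq_abs, abs_le]
    exact ⟨le_max_left _ _, max_le (by simp) (min_le_left _ _)⟩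
  have hφ_lip (N : ℕ) (a b : ℝ) : |φ N a - φ N b| ≤ |a - b| := by
    simp only [φ, max_comm (-(N : ℝ))]
    exact (abs_max_sub_max_le_abs _ _ _).trans (abs_min_sub_min_le_max _ _ _ _ |>.trans (by simp))
  have hφ_lim (r : ℝ) : Tendsto (fun N : ℕ => φ N r) atTop (𝓝 r) := by
    refine tendsto_const_nhds.congr' ?_
    filter_upwards [eventually_ge_atTop ⌈|r|⌉₊] with N hN
    have hr : |r| ≤ N := (Nat.le_ceil _).trans (by exact_mod_cast hN)
    rw [abs_le] at hr
    simp [φ, min_eq_right hr.2, max_eq_right hr.1]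
  have hgT : AEStronglyMeasurable (fun x => g (T x)) μ := hg.comp_measurePreserving hT
  -- `g` need not be integrable, but its truncations `φ N ∘ g` are, and invariance applies to them
  have h_trunc (N : ℕ) : ∫ x, (φ N (g (T x)) - φ N (g x)) ∂μ = 0 := by
    have hφg : AEStronglyMeasurable (fun x => φ N (g x)) μ :=
      (hφ_cont N).comp_aestronglyMeasurable hg
    have hφg_int : Integrable (fun x => φ N (g x)) μ :=
      .of_bound hφg N (.of_forall fun x => hφ_bound N _)
    have hφgT_int : Integrable (fun x => φ N (g (T x))) μ :=
      hT.integrable_comp_of_integrable hφg_int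
    have h_inv := integral_map hT.aemeasurable (f := fun y => φ N (g y)) (by rwa [hT.map_eq])
    rw [hT.map_eq] at h_inv
    rw [integral_sub hφgT_int hφg_int, ← h_inv, sub_self]
  refine tendsto_nhds_unique (f := fun N : ℕ => ∫ x, (φ N (g (T x)) - φ N (g x)) ∂μ) (l := atTop)
    ?_ (tendsto_const_nhds.congr fun N => (h_trunc N).symm)
  refine tendsto_integral_of_dominated_convergence (fun x => |g (T x) - g x|)
    (fun N => ((hφ_cont N).comp_aestronglyMeasurable hgT).sub
      ((hφ_cont N).comp_aestronglyMeasurable hg)) hint.abs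
    (fun N => .of_forall fun x => hφ_lip N _ _)
    (.of_forall fun x => (hφ_lim _).sub (hφ_lim _))

theorem norm_sub_le_of_forall_hasDerivAt {E : Type*} [NormedAddCommGroup E] [NormedSpace ℝ E]
    {g g' : ℝ → E} {C : ℝ} (hg : ∀ t, HasDerivAt g (g' t) t) (hC : ∀ t, ‖g' t‖ ≤ C)
    (s t : ℝ) : ‖g t - g s‖ ≤ C * |t - s| := by
  simpa [Real.norm_eq_abs] using Convex.norm_image_sub_le_of_norm_hasDerivWithin_le
    (fun τ _ => (hg τ).hasDerivWithinAt) (fun τ _ => hC τ) convex_univ (mem_univ s) (mem_univ t)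

theorem tendsto_integral_slope_nhdsGT {α : Type*} [MeasurableSpace α] {μ : Measure α}
    [IsFiniteMeasure μ] {u u' : ℝ → α → ℝ} {L : ℝ}
    (hmeas : ∀ t ≥ 0, AEStronglyMeasurable (u t) μ)
    (hu : ∀ t x, HasDerivAt (u · x) (u' t x) t) (hL : ∀ t x, ‖u' t x‖ ≤ L) :
    Tendsto (fun t => ∫ x, slope (u · x) 0 t ∂μ) (𝓝[>] 0) (𝓝 (∫ x, u' 0 x ∂μ)) := by
  refine tendsto_integral_filter_of_dominated_convergence (fun _ => L)
    (eventually_nhdsWithin_of_forall fun t ht => ?_)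
    (eventually_nhdsWithin_of_forall fun t ht => ?_)
    (integrable_const L) (.of_forall fun x => ?_)
  · simp only [slope_def_field, div_eq_mul_inv]
    exact ((hmeas t ht.le).sub (hmeas 0 le_rfl)).mul_const _
  · refine .of_forall fun x => ?_
    have h := norm_sub_le_of_forall_hasDerivAt (hu · x) (hL · x) 0 t
    rw [slope_def_field, norm_div, sub_zero, Real.norm_of_nonneg ht.le]
    rw [sub_zero, abs_of_pos ht] at h
    exact div_le_of_le_mul₀ ht.le ((norm_nonneg _).trans (hL 0 x)) h
  · exact (hasDerivAt_iff_tendsto_slope.1 (hu 0 x)).mono_left (nhdsGT_le_nhdsNE 0)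

section Flow

variable {E : Type*} [NormedAddCommGroup E] [NormedSpace ℝ E] {F : E → E} {f : ℝ → E → E}
  {C : ℝ}

theorem exists_lipschitzOnWith_flow [ProperSpace E] (hF : LocallyLipschitz F)
    (hC : ∀ x, ‖F x‖ ≤ C) (hf0 : ∀ x, f 0 x = x)
    (hflow : ∀ t x, HasDerivAt (fun τ => f τ x) (F (f t x)) t) {t : ℝ} (ht : 0 ≤ t) (x₀ : E) :
    ∃ K, LipschitzOnWith K (f t) (closedBall x₀ 1) := by
  set s := closedBall x₀ (1 + C * t)
  obtain ⟨K, hK⟩ := hF.locallyLipschitzOn.exists_lipschitzOnWith_of_compact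
    (isCompact_closedBall x₀ (1 + C * t))
  have h_mem : ∀ x ∈ closedBall x₀ 1, ∀ τ ∈ Ico 0 t, f τ x ∈ s := by
    intro x hx τ hτ
    have h_disp := norm_sub_le_of_forall_hasDerivAt (hflow · x) (fun _ => hC _) 0 τ
    rw [hf0, sub_zero, abs_of_nonneg hτ.1, ← dist_eq_norm] at h_disp
    rw [mem_closedBall] at hx ⊢
    have hCτ : C * τ ≤ C * t :=
      mul_le_mul_of_nonneg_left hτ.2.le ((norm_nonneg _).trans (hC 0))
    linarith [dist_triangle (f τ x) x x₀]
  have h_cont (x : E) : Continuous (fun τ => f τ x) :=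
    continuous_iff_continuousAt.2 fun τ => (hflow τ x).continuousAt
  refine ⟨(Real.exp (K * t)).toNNReal, LipschitzOnWith.of_dist_le_mul fun x hx y hy => ?_⟩
  have h := dist_le_of_trajectories_ODE_of_mem (v := fun _ => F) (s := fun _ => s)
    (fun _ _ => hK) (h_cont x).continuousOn (fun τ _ => (hflow τ x).hasDerivWithinAt)
    (h_mem x hx) (h_cont y).continuousOn (fun τ _ => (hflow τ y).hasDerivWithinAt)
    (h_mem y hy) (le_of_eq (by rw [hf0, hf0])) t (right_mem_Icc.2 ht)
  rw [Real.coe_toNNReal _ (Real.exp_nonneg _), mul_comm]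
  simpa using h

theorem continuous_flow [ProperSpace E] (hF : LocallyLipschitz F) (hC : ∀ x, ‖F x‖ ≤ C)
    (hf0 : ∀ x, f 0 x = x) (hflow : ∀ t x, HasDerivAt (fun τ => f τ x) (F (f t x)) t)
    {t : ℝ} (ht : 0 ≤ t) : Continuous (f t) :=
  continuous_iff_continuousAt.2 fun x₀ =>
    let ⟨_, hK⟩ := exists_lipschitzOnWith_flow hF hC hf0 hflow ht x₀
    hK.continuousOn.continuousAt (closedBall_mem_nhds x₀ one_pos)

theorem measurePreserving_flow [ProperSpace E] [MeasurableSpace E] [BorelSpace E]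
    {μ : Measure E} (hF : LocallyLipschitz F) (hC : ∀ x, ‖F x‖ ≤ C) (hf0 : ∀ x, f 0 x = x)
    (hflow : ∀ t x, HasDerivAt (fun τ => f τ x) (F (f t x)) t)
    (hinv : ∀ t A, MeasurableSet A → μ (f t ⁻¹' A) = μ A) {t : ℝ} (ht : 0 ≤ t) :
    MeasurePreserving (f t) μ μ :=
  have hmeas := (continuous_flow hF hC hf0 hflow ht).measurable
  ⟨hmeas, Measure.ext fun A hA => by rw [Measure.map_apply hmeas hA, hinv t A hA]⟩

end Flow

theorem equivariant_divergence_stmt6_general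
    {E : Type*} [NormedAddCommGroup E] [NormedSpace ℝ E] [FiniteDimensional ℝ E]
    [MeasurableSpace E] [BorelSpace E]
    (F : E → E) (hF : ContDiff ℝ 2 F)
    (hFbdd : ∃ C : ℝ, ∀ x : E, ‖F x‖ ≤ C)
    (f : ℝ → E → E)
    (hf0 : ∀ x : E, f 0 x = x)
    (hflow : ∀ t : ℝ, ∀ x : E, HasDerivAt (fun τ : ℝ => f τ x) (F (f t x)) t)
    (μ : Measure E) [IsFiniteMeasure μ]
    (hinv : ∀ t : ℝ, ∀ A : Set E, MeasurableSet A → μ (f t ⁻¹' A) = μ A)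
    (η : E → ℝ) (hη : ContDiff ℝ 1 η)
    (hηbdd : ∃ C : ℝ, ∀ x : E, ‖fderiv ℝ η x‖ ≤ C) :
    ∫ x, fderiv ℝ η x (F x) ∂μ = 0 := by
  obtain ⟨CF, hCF⟩ := hFbdd
  obtain ⟨Cη, hCη⟩ := hηbdd
  have hf_pres (t : ℝ) (ht : 0 ≤ t) : MeasurePreserving (f t) μ μ :=
    measurePreserving_flow (hF.of_le one_le_two).locallyLipschitz hCF hf0 hflow hinv ht
  have hu (t : ℝ) (x : E) :
      HasDerivAt (fun τ => η (f τ x)) (fderiv ℝ η (f t x) (F (f t x))) t :=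
    (hη.differentiable one_ne_zero _).hasFDerivAt.comp_hasDerivAt t (hflow t x)
  have hu_bound (t : ℝ) (x : E) : ‖fderiv ℝ η (f t x) (F (f t x))‖ ≤ Cη * CF :=
    (ContinuousLinearMap.le_opNorm _ _).trans
      (mul_le_mul (hCη _) (hCF _) (norm_nonneg _) ((norm_nonneg _).trans (hCη 0)))
  have h_meas (t : ℝ) (ht : 0 ≤ t) : AEStronglyMeasurable (fun x => η (f t x)) μ :=
    hη.continuous.aestronglyMeasurable.comp_measurePreserving (hf_pres t ht)
  have h_slope (t : ℝ) (ht : 0 < t) : ∫ x, slope (fun τ => η (f τ x)) 0 t ∂μ = 0 := by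
    have h_int : Integrable (fun x => η (f t x) - η x) μ := by
      refine .of_bound ((h_meas t ht.le).sub hη.continuous.aestronglyMeasurable)
        (Cη * CF * |t|) (.of_forall fun x => ?_)
      simpa [hf0] using norm_sub_le_of_forall_hasDerivAt (hu · x) (hu_bound · x) 0 t
    simp only [slope_def_field, hf0, sub_zero, integral_div,
      (hf_pres t ht.le).integral_comp_sub_eq_zero hη.continuous.aestronglyMeasurable h_int,
      zero_div]
  have h_lim := tendsto_integral_slope_nhdsGT h_meas hu hu_bound
  simp only [hf0] at h_lim
  exact tendsto_nhds_unique h_lim (tendsto_const_nhds.congr'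
    (eventually_nhdsWithin_of_forall fun t ht => (h_slope t ht).symm))

/-- `ρ(F(η)) = 0`.
If `F` is bounded, `μ` is a finite Borel measure invariant under the flow of `F`,
and `η : E → ℝ` is C¹ with bounded derivative, then
`∫ Dη(x)(F x) dμ(x) = 0`. -/
theorem equivariant_divergence_stmt6
    {E : Type*} [NormedAddCommGroup E] [NormedSpace ℝ E] [FiniteDimensional ℝ E]
    [MeasurableSpace E] [BorelSpace E]
    (F : E → E) (hF : ContDiff ℝ 2 F)
    (hFbdd : ∃ C : ℝ, ∀ x : E, ‖F x‖ ≤ C)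
    (f : ℝ → E → E)
    (hf0 : ∀ x : E, f 0 x = x)
    (hfadd : ∀ s t : ℝ, ∀ x : E, f (s + t) x = f s (f t x))
    (hflow : ∀ t : ℝ, ∀ x : E, HasDerivAt (fun τ : ℝ => f τ x) (F (f t x)) t)
    (μ : Measure E) [IsFiniteMeasure μ]
    (hinv : ∀ t : ℝ, ∀ A : Set E, MeasurableSet A → μ (f t ⁻¹' A) = μ A)
    (η : E → ℝ) (hη : ContDiff ℝ 1 η)
    (hηbdd : ∃ C : ℝ, ∀ x : E, ‖fderiv ℝ η x‖ ≤ C) :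
    ∫ x, fderiv ℝ η x (F x) ∂μ = 0 :=
  equivariant_divergence_stmt6_general F hF hFbdd f hf0 hflow μ hinv η hη hηbdd
end

section
/- Suppose F is bounded, μ is a finite Borel measure on E invariant under the flow (μ (f t ⁻¹' A) = μ A for every t ∈ ℝ and every Borel set A), and Φ, η : E → ℝ are C¹, bounded, with bounded derivatives. Then ∫ Φ(x) · Dη(x)(F x) dμ(x) = − ∫ η(x) · DΦ(x)(F x) dμ(x); that is, integration by parts along the flow direction holds with respect to any invariant measure. -/
/-!
Since `D(Φ η)(F) = Φ · Dη(F) + η · DΦ(F)`, it suffices that `∫ Dg(F) dμ = 0` for `g = Φ η`.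
By invariance of `μ`, `∫ (g ∘ f t - g) / t dμ = 0` for every `t > 0`; by the mean value theorem the
difference quotients are bounded by `‖Dg‖∞ ‖F‖∞`, and they tend to `Dg(F)` pointwise as `t → 0⁺`,
so dominated convergence gives the claim.
-/

open MeasureTheory Metric Filter Topology

section FlowMaps

variable {E : Type*} [NormedAddCommGroup E] [NormedSpace ℝ E] {F : E → E} {f : ℝ → E → E}
  {D : ℝ}

theorem norm_flow_sub_le (hf0 : ∀ x, f 0 x = x)
    (hflow : ∀ t x, HasDerivAt (fun τ : ℝ => f τ x) (F (f t x)) t) (hD : ∀ x, ‖F x‖ ≤ D)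
    (x : E) (t : ℝ) : ‖f t x - x‖ ≤ D * |t| := by
  simpa [hf0 x] using convex_univ.norm_image_sub_le_of_norm_hasDerivWithin_le
    (fun τ _ => (hflow τ x).hasDerivWithinAt) (fun τ _ => hD _) (Set.mem_univ 0) (Set.mem_univ t)

/-- Grönwall: on `[0, t]` the trajectories issued from the unit ball around `x₀` stay in the
compact ball of radius `1 + D t`, where `F` is Lipschitz. -/
theorem flow_locallyLipschitz [ProperSpace E] (hF : LocallyLipschitz F) (hD : ∀ x, ‖F x‖ ≤ D)
    (hf0 : ∀ x, f 0 x = x) (hflow : ∀ t x, HasDerivAt (fun τ : ℝ => f τ x) (F (f t x)) t)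
    {t : ℝ} (ht : 0 ≤ t) : LocallyLipschitz (f t) := by
  intro x₀
  obtain ⟨K, hK⟩ := hF.locallyLipschitzOn.exists_lipschitzOnWith_of_compact
    (isCompact_closedBall x₀ (1 + D * t))
  have hD0 : 0 ≤ D := (norm_nonneg _).trans (hD x₀)
  have stays : ∀ y ∈ closedBall x₀ 1, ∀ s ∈ Set.Ico 0 t, f s y ∈ closedBall x₀ (1 + D * t) := by
    intro y hy s hs
    have hs' : D * |s| ≤ D * t := by
      rw [abs_of_nonneg hs.1]; exact mul_le_mul_of_nonneg_left hs.2.le hD0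
    calc dist (f s y) x₀ ≤ dist (f s y) y + dist y x₀ := dist_triangle _ _ _
      _ ≤ D * t + 1 := by
        rw [dist_eq_norm]; exact add_le_add ((norm_flow_sub_le hf0 hflow hD y s).trans hs') hy
      _ = 1 + D * t := add_comm _ _
  refine ⟨_, _, closedBall_mem_nhds x₀ one_pos,
    LipschitzOnWith.of_dist_le' (K := Real.exp (K * t)) fun y hy z hz => ?_⟩
  have gronwall := dist_le_of_trajectories_ODE_of_mem (v := fun _ => F) (K := K) (a := 0) (b := t)
    (fun _ _ => hK) (fun τ _ => (hflow τ y).continuousAt.continuousWithinAt)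
    (fun τ _ => (hflow τ y).hasDerivWithinAt) (stays y hy)
    (fun τ _ => (hflow τ z).continuousAt.continuousWithinAt)
    (fun τ _ => (hflow τ z).hasDerivWithinAt) (stays z hz) (by rw [hf0, hf0]) t ⟨ht, le_rfl⟩
  rwa [sub_zero, mul_comm] at gronwall

end FlowMaps

section InvariantMeasure

variable {E G : Type*} [NormedAddCommGroup E] [NormedSpace ℝ E] [MeasurableSpace E]
  [OpensMeasurableSpace E] [SecondCountableTopology E] [NormedAddCommGroup G] [NormedSpace ℝ G]
  {F : E → E} {f : ℝ → E → E} {μ : Measure E} {D : ℝ}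

theorem integral_fderiv_apply_eq_zero_of_measurePreserving [IsFiniteMeasure μ]
    (hD : ∀ x, ‖F x‖ ≤ D) (hf0 : ∀ x, f 0 x = x)
    (hflow : ∀ t x, HasDerivAt (fun τ : ℝ => f τ x) (F (f t x)) t)
    (hμ : ∀ t > 0, MeasurePreserving (f t) μ μ) {g : E → G} {C L : ℝ}
    (hg : Differentiable ℝ g) (hgC : ∀ x, ‖g x‖ ≤ C) (hgL : ∀ x, ‖fderiv ℝ g x‖ ≤ L) :
    ∫ x, fderiv ℝ g x (F x) ∂μ = 0 := by
  set q : ℝ → E → G := fun t x => t⁻¹ • (g (f t x) - g x)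
  have hg_meas : AEStronglyMeasurable g μ := hg.continuous.aestronglyMeasurable
  have hgf_meas : ∀ t > 0, AEStronglyMeasurable (fun x => g (f t x)) μ :=
    fun t ht => hg_meas.comp_measurePreserving (hμ t ht)
  have integral_q : ∀ t > 0, ∫ x, q t x ∂μ = 0 := by
    intro t ht
    have hgf : ∫ x, g (f t x) ∂μ = ∫ x, g x ∂μ := by
      rw [← integral_map (hμ t ht).measurable.aemeasurable (by rwa [(hμ t ht).map_eq]),
        (hμ t ht).map_eq]
    simp only [q, integral_smul]
    rw [integral_sub (.of_bound (hgf_meas t ht) C (ae_of_all _ fun x => hgC _))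
      (.of_bound hg_meas C (ae_of_all _ hgC)), hgf, sub_self, smul_zero]
  have q_bound : ∀ t > 0, ∀ x, ‖q t x‖ ≤ L * D := by
    intro t ht x
    rw [norm_smul, norm_inv, Real.norm_of_nonneg ht.le, inv_mul_le_iff₀ ht]
    calc ‖g (f t x) - g x‖ ≤ L * ‖f t x - x‖ :=
          convex_univ.norm_image_sub_le_of_norm_fderiv_le (fun y _ => hg y) (fun y _ => hgL y)
            (Set.mem_univ _) (Set.mem_univ _)
      _ ≤ L * (D * |t|) :=
          mul_le_mul_of_nonneg_left (norm_flow_sub_le hf0 hflow hD x t)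
            ((norm_nonneg _).trans (hgL x))
      _ = t * (L * D) := by rw [abs_of_pos ht]; ring
  have q_lim : ∀ x, Tendsto (fun t => q t x) (𝓝[>] 0) (𝓝 (fderiv ℝ g x (F x))) := by
    intro x
    have hd : HasDerivAt (fun τ => g (f τ x)) (fderiv ℝ g x (F x)) 0 := by
      simpa [hf0 x, Function.comp_def] using
        (hg (f 0 x)).hasFDerivAt.comp_hasDerivAt 0 (hflow 0 x)
    simpa [hf0 x] using hd.tendsto_slope_zero_right
  have hlim : Tendsto (fun t => ∫ x, q t x ∂μ) (𝓝[>] 0) (𝓝 (∫ x, fderiv ℝ g x (F x) ∂μ)) :=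
    tendsto_integral_filter_of_dominated_convergence (fun _ => L * D)
      (eventually_nhdsWithin_of_forall fun t ht => ((hgf_meas t ht).sub hg_meas).const_smul t⁻¹)
      (eventually_nhdsWithin_of_forall fun t ht => ae_of_all _ (q_bound t ht))
      (integrable_const _) (ae_of_all _ q_lim)
  exact tendsto_nhds_unique hlim <| tendsto_const_nhds.congr' <|
    eventually_nhdsWithin_of_forall fun t ht => (integral_q t ht).symm

end InvariantMeasure

section ProductRule

variable {E : Type*} [NormedAddCommGroup E] [NormedSpace ℝ E] {Φ η : E → ℝ} {CΦ Cη LΦ Lη : ℝ}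

theorem norm_fderiv_mul_le (hΦ : Differentiable ℝ Φ) (hη : Differentiable ℝ η)
    (hΦC : ∀ x, |Φ x| ≤ CΦ) (hηC : ∀ x, |η x| ≤ Cη)
    (hΦL : ∀ x, ‖fderiv ℝ Φ x‖ ≤ LΦ) (hηL : ∀ x, ‖fderiv ℝ η x‖ ≤ Lη) (x : E) :
    ‖fderiv ℝ (fun y => Φ y * η y) x‖ ≤ CΦ * Lη + Cη * LΦ := by
  rw [fderiv_fun_mul (hΦ x) (hη x)]
  refine (norm_add_le _ _).trans (add_le_add ?_ ?_) <;> rw [norm_smul, Real.norm_eq_abs]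
  · exact mul_le_mul (hΦC x) (hηL x) (norm_nonneg _) ((abs_nonneg _).trans (hΦC x))
  · exact mul_le_mul (hηC x) (hΦL x) (norm_nonneg _) ((abs_nonneg _).trans (hηC x))

theorem integrable_mul_fderiv_apply [MeasurableSpace E] [OpensMeasurableSpace E]
    [SecondCountableTopology E] {μ : Measure E} [IsFiniteMeasure μ] {F : E → E} {D : ℝ}
    (hF : Continuous F) (hD : ∀ x, ‖F x‖ ≤ D) (hΦ : Continuous Φ) (hΦC : ∀ x, |Φ x| ≤ CΦ)
    (hη : ContDiff ℝ 1 η) (hηL : ∀ x, ‖fderiv ℝ η x‖ ≤ Lη) :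
    Integrable (fun x => Φ x * fderiv ℝ η x (F x)) μ := by
  refine .of_bound (hΦ.mul ((hη.continuous_fderiv one_ne_zero).clm_apply hF)).aestronglyMeasurable
    (CΦ * (Lη * D)) (ae_of_all _ fun x => ?_)
  rw [norm_mul, Real.norm_eq_abs]
  exact mul_le_mul (hΦC x) ((fderiv ℝ η x).le_of_opNorm_le_of_le (hηL x) (hD x))
    (norm_nonneg _) ((abs_nonneg _).trans (hΦC x))

end ProductRule

theorem equivariant_divergence_stmt7_general
    {E : Type*} [NormedAddCommGroup E] [NormedSpace ℝ E] [FiniteDimensional ℝ E]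
    [MeasurableSpace E] [BorelSpace E]
    (F : E → E) (hF : ContDiff ℝ 2 F)
    (hFbdd : ∃ C : ℝ, ∀ x : E, ‖F x‖ ≤ C)
    (f : ℝ → E → E)
    (hf0 : ∀ x : E, f 0 x = x)
    (hflow : ∀ t : ℝ, ∀ x : E, HasDerivAt (fun τ : ℝ => f τ x) (F (f t x)) t)
    (μ : Measure E) [IsFiniteMeasure μ]
    (hinv : ∀ t : ℝ, ∀ A : Set E, MeasurableSet A → μ (f t ⁻¹' A) = μ A)
    (Φ η : E → ℝ) (hΦ : ContDiff ℝ 1 Φ) (hη : ContDiff ℝ 1 η)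
    (hΦbdd : ∃ C : ℝ, ∀ x : E, |Φ x| ≤ C)
    (hηbdd : ∃ C : ℝ, ∀ x : E, |η x| ≤ C)
    (hDΦbdd : ∃ C : ℝ, ∀ x : E, ‖fderiv ℝ Φ x‖ ≤ C)
    (hDηbdd : ∃ C : ℝ, ∀ x : E, ‖fderiv ℝ η x‖ ≤ C) :
    ∫ x, Φ x * fderiv ℝ η x (F x) ∂μ
      = - ∫ x, η x * fderiv ℝ Φ x (F x) ∂μ := by
  obtain ⟨D, hD⟩ := hFbdd
  obtain ⟨CΦ, hΦC⟩ := hΦbdd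
  obtain ⟨Cη, hηC⟩ := hηbdd
  obtain ⟨LΦ, hΦL⟩ := hDΦbdd
  obtain ⟨Lη, hηL⟩ := hDηbdd
  have hΦd := hΦ.differentiable one_ne_zero
  have hηd := hη.differentiable one_ne_zero
  have hμ : ∀ t > 0, MeasurePreserving (f t) μ μ := fun t ht =>
    have hmeas := (flow_locallyLipschitz (hF.of_le (by norm_num)).locallyLipschitz hD hf0 hflow
      ht.le).continuous.measurable
    ⟨hmeas, Measure.ext fun A hA => by rw [Measure.map_apply hmeas hA, hinv t A hA]⟩
  have hΦηC : ∀ x, ‖Φ x * η x‖ ≤ CΦ * Cη := fun x => by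
    rw [norm_mul, Real.norm_eq_abs, Real.norm_eq_abs]
    exact mul_le_mul (hΦC x) (hηC x) (abs_nonneg _) ((abs_nonneg _).trans (hΦC x))
  have hzero := integral_fderiv_apply_eq_zero_of_measurePreserving hD hf0 hflow hμ
    (hΦd.fun_mul hηd) hΦηC (norm_fderiv_mul_le hΦd hηd hΦC hηC hΦL hηL)
  have hsplit : ∀ x, fderiv ℝ (fun y => Φ y * η y) x (F x) =
      Φ x * fderiv ℝ η x (F x) + η x * fderiv ℝ Φ x (F x) := fun x => by
    simp [fderiv_fun_mul (hΦd x) (hηd x)]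
  simp only [hsplit] at hzero
  rw [integral_add (integrable_mul_fderiv_apply hF.continuous hD hΦ.continuous hΦC hη hηL)
    (integrable_mul_fderiv_apply hF.continuous hD hη.continuous hηC hΦ hΦL)] at hzero
  exact eq_neg_of_add_eq_zero_left hzero

/-- integration by parts along the flow direction.
If `F` is bounded, `μ` is a finite Borel measure invariant under the flow of `F`,
and `Φ η : E → ℝ` are C¹, bounded, with bounded derivatives, then
`∫ Φ(x) · Dη(x)(F x) dμ(x) = − ∫ η(x) · DΦ(x)(F x) dμ(x)`. -/
theorem equivariant_divergence_stmt7
    {E : Type*} [NormedAddCommGroup E] [NormedSpace ℝ E] [FiniteDimensional ℝ E]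
    [MeasurableSpace E] [BorelSpace E]
    (F : E → E) (hF : ContDiff ℝ 2 F)
    (hFbdd : ∃ C : ℝ, ∀ x : E, ‖F x‖ ≤ C)
    (f : ℝ → E → E)
    (hf0 : ∀ x : E, f 0 x = x)
    (hfadd : ∀ s t : ℝ, ∀ x : E, f (s + t) x = f s (f t x))
    (hflow : ∀ t : ℝ, ∀ x : E, HasDerivAt (fun τ : ℝ => f τ x) (F (f t x)) t)
    (μ : Measure E) [IsFiniteMeasure μ]
    (hinv : ∀ t : ℝ, ∀ A : Set E, MeasurableSet A → μ (f t ⁻¹' A) = μ A)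
    (Φ η : E → ℝ) (hΦ : ContDiff ℝ 1 Φ) (hη : ContDiff ℝ 1 η)
    (hΦbdd : ∃ C : ℝ, ∀ x : E, |Φ x| ≤ C)
    (hηbdd : ∃ C : ℝ, ∀ x : E, |η x| ≤ C)
    (hDΦbdd : ∃ C : ℝ, ∀ x : E, ‖fderiv ℝ Φ x‖ ≤ C)
    (hDηbdd : ∃ C : ℝ, ∀ x : E, ‖fderiv ℝ η x‖ ≤ C) :
    ∫ x, Φ x * fderiv ℝ η x (F x) ∂μ
      = - ∫ x, η x * fderiv ℝ Φ x (F x) ∂μ :=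
  equivariant_divergence_stmt7_general F hF hFbdd f hf0 hflow μ hinv Φ η hΦ hη hΦbdd hηbdd hDΦbdd
    hDηbdd
end

section
/- Fix x ∈ E and ν₀ ∈ (E →L[ℝ] ℝ), and define the adjoint covector ν : ℝ → (E →L[ℝ] ℝ) along the orbit of x by ν t := ν₀ ∘ D(f (−t))(f t x). Then t ↦ ν t is differentiable and satisfies the homogeneous adjoint equation d/dt (ν t) = − (ν t) ∘ DF(f t x) for all t ∈ ℝ. -/
/-!
By the cocycle property of the flow, `ν (t + h) = ν t ∘ D(f (-h))(f h (f t x))`, so everything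
reduces to the first-order expansion `D(f s)(y) = 1 + s • DF(y₀) + o(s)`, uniformly as `s → 0⁺`
and `y → y₀`. For this, compare `u τ = f τ z - f τ y` with the linear equation
`u' = DF(y₀) u`: Grönwall keeps `‖u τ‖ ≤ e^{Ks} ‖z - y‖`, and near `y₀` the velocity
`F (f τ z) - F (f τ y)` is `η ‖u τ‖`-close to `DF(y₀) u τ`. Hence `y ↦ f s y - y - s • DF(y₀) y`
is `O(η s)`-Lipschitz near `y₀`, which bounds its derivative. Applying the same expansion to the
backward flow `s ↦ f (-s)` of `-F` gives the derivative from both sides.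
-/

open Set Metric Filter Asymptotics
open scoped Topology NNReal

section ODE

variable {E : Type*} [NormedAddCommGroup E] [NormedSpace ℝ E]

theorem norm_sub_le_of_hasDerivAt_of_norm_field_lt {v : E → E} {g : ℝ → E} {y₀ : E}
    {r ρ M T : ℝ} (hg : ∀ t, HasDerivAt g (v (g t)) t)
    (hv : ∀ z ∈ closedBall y₀ ρ, ‖v z‖ < M) (hM : 0 ≤ M) (h0 : ‖g 0 - y₀‖ ≤ r)
    (hT : r + M * T ≤ ρ) : ∀ t ∈ Icc 0 T, ‖g t - y₀‖ ≤ r + M * t := by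
  have hgy : ∀ t, HasDerivAt (fun t => g t - y₀) (v (g t)) t := fun t => (hg t).sub_const y₀
  refine image_norm_le_of_norm_deriv_right_lt_deriv_boundary' (B' := fun _ => M)
    (fun t _ => (hgy t).continuousAt.continuousWithinAt) (fun t _ => (hgy t).hasDerivWithinAt)
    (by simpa using h0) (by fun_prop) (fun t _ => ?_) fun t ht hgt => hv _ ?_
  · simpa using ((hasDerivAt_id t).const_mul M |>.const_add r).hasDerivWithinAt
  · rw [mem_closedBall, dist_eq_norm, hgt]
    nlinarith [ht.2]

theorem norm_sub_sub_smul_le_of_norm_deriv_le {u u' : ℝ → E} {A : E →L[ℝ] E} {B δ s : ℝ}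
    (hu : ∀ t, HasDerivAt u (u' t) t) (hB : ∀ t ∈ Icc 0 s, ‖u' t‖ ≤ B)
    (hA : ∀ t ∈ Icc 0 s, ‖u' t - A (u t)‖ ≤ δ) (hs : 0 ≤ s) :
    ‖u s - u 0 - s • A (u 0)‖ ≤ s * (δ + ‖A‖ * B * s) := by
  have hdrift : ∀ t ∈ Icc 0 s, ‖u t - u 0‖ ≤ B * s := fun t ht =>
    (norm_image_sub_le_of_norm_deriv_le_segment' (fun t _ => (hu t).hasDerivWithinAt)
      (fun t ht => hB t (Ico_subset_Icc_self ht)) t ht).trans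
      (by simpa using mul_le_mul_of_nonneg_left ht.2 ((norm_nonneg _).trans (hB 0 ⟨le_rfl, hs⟩)))
  have hw : ∀ t, HasDerivAt (fun t => u t - t • A (u 0)) (u' t - A (u 0)) t := fun t =>
    ((hu t).sub ((hasDerivAt_id t).smul_const (A (u 0)))).congr_deriv (by simp)
  have hw' : ∀ t ∈ Icc 0 s, ‖u' t - A (u 0)‖ ≤ δ + ‖A‖ * B * s := fun t ht =>
    calc ‖u' t - A (u 0)‖ = ‖(u' t - A (u t)) + A (u t - u 0)‖ := by rw [map_sub]; abel_nf
      _ ≤ ‖u' t - A (u t)‖ + ‖A‖ * ‖u t - u 0‖ :=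
        (norm_add_le _ _).trans (by gcongr; exact A.le_opNorm _)
      _ ≤ δ + ‖A‖ * (B * s) := by gcongr; exacts [hA t ht, hdrift t ht]
      _ = δ + ‖A‖ * B * s := by ring
  have := norm_image_sub_le_of_norm_deriv_le_segment' (fun t _ => (hw t).hasDerivWithinAt)
    (fun t ht => hw' t (Ico_subset_Icc_self ht)) s ⟨hs, le_rfl⟩
  rw [sub_zero, zero_smul, sub_zero, sub_right_comm] at this
  linarith

end ODE

section Flow

variable {E : Type*} [NormedAddCommGroup E] [NormedSpace ℝ E] {F : E → E} {f : ℝ → E → E}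

theorem fderiv_flow_add (hfadd : ∀ s t : ℝ, ∀ x : E, f (s + t) x = f s (f t x))
    (hfd : ∀ t, Differentiable ℝ (f t)) (s t : ℝ) (x : E) :
    fderiv ℝ (f (s + t)) x = (fderiv ℝ (f s) (f t x)).comp (fderiv ℝ (f t) x) := by
  rw [show f (s + t) = f s ∘ f t from funext (hfadd s t)]
  exact fderiv_comp x (hfd s _) (hfd t x)

theorem fderiv_flow_neg_add (hf0 : ∀ x : E, f 0 x = x)
    (hfadd : ∀ s t : ℝ, ∀ x : E, f (s + t) x = f s (f t x))
    (hfd : ∀ t, Differentiable ℝ (f t)) (h t : ℝ) (x : E) :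
    fderiv ℝ (f (-(h + t))) (f (h + t) x) =
      (fderiv ℝ (f (-t)) (f t x)).comp (fderiv ℝ (f (-h)) (f h (f t x))) := by
  rw [neg_add_rev, fderiv_flow_add hfadd hfd, hfadd h, ← hfadd (-h), neg_add_cancel, hf0]

theorem norm_flow_sub_flow_sub_le (hf0 : ∀ x : E, f 0 x = x)
    (hflow : ∀ t : ℝ, ∀ x : E, HasDerivAt (fun τ : ℝ => f τ x) (F (f t x)) t)
    {y₀ y z : E} {ρ η s : ℝ} {K : ℝ≥0}
    (hFd : ∀ w ∈ closedBall y₀ ρ, DifferentiableAt ℝ F w)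
    (hDF : ∀ w ∈ closedBall y₀ ρ, ‖fderiv ℝ F w - fderiv ℝ F y₀‖ ≤ η)
    (hK : LipschitzOnWith K F (closedBall y₀ ρ))
    (hy : ∀ τ ∈ Icc 0 s, f τ y ∈ closedBall y₀ ρ) (hz : ∀ τ ∈ Icc 0 s, f τ z ∈ closedBall y₀ ρ)
    (hs : 0 ≤ s) :
    ‖f s z - f s y - (z - y) - s • fderiv ℝ F y₀ (z - y)‖ ≤
      s * (η + ‖fderiv ℝ F y₀‖ * K * s) * (Real.exp (K * s) * ‖z - y‖) := by
  have hη : 0 ≤ η := (norm_nonneg _).trans (hDF _ (hy 0 ⟨le_rfl, hs⟩))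
  have hgronwall : ∀ τ ∈ Icc 0 s, ‖f τ z - f τ y‖ ≤ Real.exp (K * s) * ‖z - y‖ := fun τ hτ => by
    have := dist_le_of_trajectories_ODE_of_mem (v := fun _ => F) (s := fun _ => closedBall y₀ ρ)
      (fun _ _ => hK) (fun t _ => (hflow t z).continuousAt.continuousWithinAt)
      (fun t _ => (hflow t z).hasDerivWithinAt) (fun t ht => hz t (Ico_subset_Icc_self ht))
      (fun t _ => (hflow t y).continuousAt.continuousWithinAt)
      (fun t _ => (hflow t y).hasDerivWithinAt) (fun t ht => hy t (Ico_subset_Icc_self ht))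
      (by rw [hf0, hf0]) τ hτ
    rw [dist_eq_norm, dist_eq_norm, sub_zero, mul_comm] at this
    exact this.trans (by gcongr; exact hτ.2)
  have := norm_sub_sub_smul_le_of_norm_deriv_le (u := fun τ => f τ z - f τ y)
    (A := fderiv ℝ F y₀) (B := K * (Real.exp (K * s) * ‖z - y‖))
    (δ := η * (Real.exp (K * s) * ‖z - y‖)) (fun t => (hflow t z).sub (hflow t y))
    (fun τ hτ => (hK.norm_sub_le (hz τ hτ) (hy τ hτ)).trans (by gcongr; exact hgronwall τ hτ))
    (fun τ hτ => ((convex_closedBall y₀ ρ).norm_image_sub_le_of_norm_fderiv_le' hFd hDF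
      (hy τ hτ) (hz τ hτ)).trans (by gcongr; exact hgronwall τ hτ)) hs
  simp only [hf0] at this
  convert this using 1
  ring

theorem norm_fderiv_flow_sub_le (hf0 : ∀ x : E, f 0 x = x)
    (hflow : ∀ t : ℝ, ∀ x : E, HasDerivAt (fun τ : ℝ => f τ x) (F (f t x)) t)
    (hfd : ∀ t, Differentiable ℝ (f t)) {y₀ y : E} {ρ η M s : ℝ} {K : ℝ≥0}
    (hFd : ∀ w ∈ closedBall y₀ ρ, DifferentiableAt ℝ F w)
    (hDF : ∀ w ∈ closedBall y₀ ρ, ‖fderiv ℝ F w - fderiv ℝ F y₀‖ ≤ η)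
    (hK : LipschitzOnWith K F (closedBall y₀ ρ)) (hM : ∀ w ∈ closedBall y₀ ρ, ‖F w‖ < M)
    (hs : 0 ≤ s) (hMs : M * s ≤ ρ / 2) (hy : y ∈ ball y₀ (ρ / 2)) :
    ‖fderiv ℝ (f s) y - ContinuousLinearMap.id ℝ E - s • fderiv ℝ F y₀‖ ≤
      s * (η + ‖fderiv ℝ F y₀‖ * K * s) * Real.exp (K * s) := by
  set A := fderiv ℝ F y₀
  have hy₀ : y₀ ∈ closedBall y₀ ρ := mem_closedBall_self (by linarith [pos_of_mem_ball hy])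
  have hη : 0 ≤ η := (norm_nonneg _).trans (hDF y₀ hy₀)
  have hM0 : 0 ≤ M := (norm_nonneg _).trans (hM y₀ hy₀).le
  have htraj : ∀ w ∈ ball y₀ (ρ / 2), ∀ τ ∈ Icc 0 s, f τ w ∈ closedBall y₀ ρ := fun w hw τ hτ => by
    have := norm_sub_le_of_hasDerivAt_of_norm_field_lt (hflow · w) hM hM0
      (by simpa [hf0, ← dist_eq_norm] using (mem_ball.1 hw).le) (by linarith) τ hτ
    rw [mem_closedBall_iff_norm]
    nlinarith [mul_le_mul_of_nonneg_left hτ.2 hM0]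
  have hφ : HasFDerivAt (fun w => f s w - w - s • A w)
      (fderiv ℝ (f s) y - ContinuousLinearMap.id ℝ E - s • A) y :=
    ((hfd s y).hasFDerivAt.sub (hasFDerivAt_id y)).sub (A.hasFDerivAt.const_smul s)
  refine hφ.le_of_lip' (by positivity) ?_
  filter_upwards [isOpen_ball.mem_nhds hy] with z hz
  calc ‖f s z - z - s • A z - (f s y - y - s • A y)‖
      = ‖f s z - f s y - (z - y) - s • A (z - y)‖ := by rw [map_sub, smul_sub]; abel_nf
    _ ≤ s * (η + ‖A‖ * K * s) * (Real.exp (K * s) * ‖z - y‖) :=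
      norm_flow_sub_flow_sub_le hf0 hflow hFd hDF hK (htraj y hy) (htraj z hz) hs
    _ = s * (η + ‖A‖ * K * s) * Real.exp (K * s) * ‖z - y‖ := by ring

theorem isLittleO_fderiv_flow (hF : ContDiff ℝ 1 F) (hf0 : ∀ x : E, f 0 x = x)
    (hflow : ∀ t : ℝ, ∀ x : E, HasDerivAt (fun τ : ℝ => f τ x) (F (f t x)) t)
    (hfd : ∀ t, Differentiable ℝ (f t)) (y₀ : E) :
    (fun p : ℝ × E => fderiv ℝ (f p.1) p.2 - ContinuousLinearMap.id ℝ E - p.1 • fderiv ℝ F y₀)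
      =o[𝓝[≥] 0 ×ˢ 𝓝 y₀] Prod.fst := by
  rw [isLittleO_iff]
  intro c hc
  set A := fderiv ℝ F y₀
  set η := c / 4
  have hη : 0 < η := by positivity
  obtain ⟨ρ, hρ, hDF⟩ : ∃ ρ > 0, ∀ w ∈ closedBall y₀ ρ, ‖fderiv ℝ F w - A‖ ≤ η := by
    obtain ⟨δ, hδ, h⟩ :=
      Metric.continuousAt_iff.1 (hF.continuous_fderiv one_ne_zero).continuousAt η hη
    refine ⟨δ / 2, by positivity, fun w hw => ?_⟩
    rw [← dist_eq_norm]
    exact (h ((mem_closedBall.1 hw).trans_lt (by linarith))).le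
  have hFd : ∀ w, DifferentiableAt ℝ F w := hF.differentiable one_ne_zero
  set K : ℝ≥0 := ⟨‖A‖ + η, by positivity⟩
  have hK : LipschitzOnWith K F (closedBall y₀ ρ) :=
    (convex_closedBall y₀ ρ).lipschitzOnWith_of_nnnorm_fderiv_le (fun w _ => hFd w) fun w hw => by
      change ‖fderiv ℝ F w‖ ≤ ‖A‖ + η
      linarith [norm_le_norm_add_norm_sub' (fderiv ℝ F w) A, hDF w hw]
  set M := ‖F y₀‖ + K * ρ + 1
  have hM : ∀ w ∈ closedBall y₀ ρ, ‖F w‖ < M := fun w hw => by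
    have := hK.norm_sub_le hw (mem_closedBall_self hρ.le)
    have := norm_le_norm_add_norm_sub' (F w) (F y₀)
    have := mem_closedBall_iff_norm.1 hw
    nlinarith [K.coe_nonneg]
  have hsmall : ∀ᶠ s in 𝓝[≥] (0 : ℝ),
      0 ≤ s ∧ M * s < ρ / 2 ∧ Real.exp (K * s) < 2 ∧ ‖A‖ * K * s < η := by
    refine eventually_mem_nhdsWithin.and (nhdsWithin_le_nhds ?_)
    refine (ContinuousAt.eventually_lt (by fun_prop) continuousAt_const (by simpa using hρ)).and
      ((ContinuousAt.eventually_lt (by fun_prop) continuousAt_const (by norm_num)).and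
      (ContinuousAt.eventually_lt (by fun_prop) continuousAt_const (by simpa using hη)))
  filter_upwards [hsmall.prod_mk (ball_mem_nhds y₀ (half_pos hρ))]
  rintro ⟨s, y⟩ ⟨⟨hs, hMs, hexp, hAK⟩, hy⟩
  dsimp only at hs hMs hexp hAK hy ⊢
  calc ‖fderiv ℝ (f s) y - ContinuousLinearMap.id ℝ E - s • A‖
      ≤ s * (η + ‖A‖ * K * s) * Real.exp (K * s) :=
      norm_fderiv_flow_sub_le hf0 hflow hfd (fun w _ => hFd w) hDF hK hM hs hMs.le hy
    _ ≤ s * (η + η) * 2 := by gcongr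
    _ = c * ‖s‖ := by rw [Real.norm_of_nonneg hs]; ring

theorem hasDerivAt_fderiv_flow_neg_apply_flow (hF : ContDiff ℝ 1 F) (hf0 : ∀ x : E, f 0 x = x)
    (hflow : ∀ t : ℝ, ∀ x : E, HasDerivAt (fun τ : ℝ => f τ x) (F (f t x)) t)
    (hfd : ∀ t, Differentiable ℝ (f t)) (y₀ : E) :
    HasDerivAt (fun h => fderiv ℝ (f (-h)) (f h y₀)) (-fderiv ℝ F y₀) 0 := by
  have hflow_neg : ∀ t x, HasDerivAt (fun τ => f (-τ) x) (-F (f (-t) x)) t := fun t x => by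
    simpa [Function.comp_def] using (hflow (-t) x).scomp t (hasDerivAt_neg t)
  have hpath : Tendsto (fun h => f h y₀) (𝓝 0) (𝓝 y₀) := by
    simpa [hf0] using (hflow 0 y₀).continuousAt.tendsto
  have hneg : Tendsto (fun h : ℝ => -h) (𝓝[≤] 0) (𝓝[≥] 0) := by
    refine tendsto_nhdsWithin_iff.2
      ⟨?_, eventually_nhdsWithin_of_forall fun h hh => mem_Ici.2 (neg_nonneg.2 hh)⟩
    simpa using (continuous_neg.tendsto (0 : ℝ)).mono_left nhdsWithin_le_nhds
  have hf0_eq : f 0 = id := funext hf0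
  rw [hasDerivAt_iff_isLittleO_nhds_zero, ← nhdsLE_sup_nhdsGE]
  refine IsLittleO.sup ?_ ?_
  · have := (isLittleO_fderiv_flow hF hf0 hflow hfd y₀).comp_tendsto
      (hneg.prodMk (hpath.mono_left nhdsWithin_le_nhds))
    exact isLittleO_neg_right.1 (by simpa [Function.comp_def, hf0_eq] using this)
  · have := (isLittleO_fderiv_flow (f := fun s => f (-s)) hF.neg (by simpa using hf0) hflow_neg
      (fun t => hfd (-t)) y₀).comp_tendsto (tendsto_id.prodMk (hpath.mono_left nhdsWithin_le_nhds))
    simpa [Function.comp_def, hf0_eq] using this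

end Flow

theorem equivariant_divergence_stmt9_general
    {E : Type*} [NormedAddCommGroup E] [NormedSpace ℝ E]
    (F : E → E) (hF : ContDiff ℝ 2 F)
    (f : ℝ → E → E)
    (hf0 : ∀ x : E, f 0 x = x)
    (hfadd : ∀ s t : ℝ, ∀ x : E, f (s + t) x = f s (f t x))
    (hflow : ∀ t : ℝ, ∀ x : E, HasDerivAt (fun τ : ℝ => f τ x) (F (f t x)) t)
    (hfC2 : ∀ t : ℝ, ContDiff ℝ 2 (f t))
    (x : E) (ν₀ : E →L[ℝ] ℝ)
    (ν : ℝ → (E →L[ℝ] ℝ))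
    (hν : ∀ t : ℝ, ν t = ν₀.comp (fderiv ℝ (f (-t)) (f t x))) :
    ∀ t : ℝ, HasDerivAt ν (-(ν t).comp (fderiv ℝ F (f t x))) t := by
  intro t
  have hfd : ∀ s, Differentiable ℝ (f s) := fun s => (hfC2 s).differentiable two_ne_zero
  have hB := HasDerivAt.comp_sub_const t t <| by
    simpa using hasDerivAt_fderiv_flow_neg_apply_flow (hF.of_le one_le_two) hf0 hflow hfd (f t x)
  have hν_shift : ∀ u, ν u = (ν t).comp (fderiv ℝ (f (-(u - t))) (f (u - t) (f t x))) := by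
    intro u
    rw [hν, hν, ContinuousLinearMap.comp_assoc, ← fderiv_flow_neg_add hf0 hfadd hfd, sub_add_cancel]
  have hcomp := (hasDerivAt_const t (ν t)).clm_comp hB
  simp only [sub_self, ContinuousLinearMap.zero_comp, zero_add, ContinuousLinearMap.comp_neg]
    at hcomp
  exact hcomp.congr_of_eventuallyEq (Eventually.of_forall hν_shift)

/-- homogeneous adjoint equation.
Fix `x ∈ E` and `ν₀ : E →L[ℝ] ℝ`, and define the adjoint covector along the orbit by
`ν t := ν₀ ∘ D(f (−t))(f t x)`.  Then `t ↦ ν t` is differentiable and satisfies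
`d/dt (ν t) = − (ν t) ∘ DF(f t x)` for all `t ∈ ℝ`. -/
theorem equivariant_divergence_stmt9
    {E : Type*} [NormedAddCommGroup E] [NormedSpace ℝ E] [FiniteDimensional ℝ E]
    (F : E → E) (hF : ContDiff ℝ 2 F)
    (f : ℝ → E → E)
    (hf0 : ∀ x : E, f 0 x = x)
    (hfadd : ∀ s t : ℝ, ∀ x : E, f (s + t) x = f s (f t x))
    (hflow : ∀ t : ℝ, ∀ x : E, HasDerivAt (fun τ : ℝ => f τ x) (F (f t x)) t)
    (hfC2 : ∀ t : ℝ, ContDiff ℝ 2 (f t))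
    (x : E) (ν₀ : E →L[ℝ] ℝ)
    (ν : ℝ → (E →L[ℝ] ℝ))
    (hν : ∀ t : ℝ, ν t = ν₀.comp (fderiv ℝ (f (-t)) (f t x))) :
    ∀ t : ℝ, HasDerivAt ν (-(ν t).comp (fderiv ℝ F (f t x))) t :=
  equivariant_divergence_stmt9_general F hF f hf0 hfadd hflow hfC2 x ν₀ ν hν
end
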